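/- Define h : ℕ × ℕ → Option (ℕ × ℕ) by h(n, k) = some (n - (2k + 1), k + 1) if 2k + 1 ≤ n, else none. Then iterating h from (m², 0): after m steps one reaches (0, m), and the reverse square-root computation succeeds; moreover, if n is not a perfect square, then iterating h from (n, 0) eventually reaches a state (s, k) with 0 < s < 2k + 1, i.e. the computation stalls. -/
import Mathlib


/-- One step of reverse squaring: subtract the next odd number `2k + 1`
if possible, else fail. -/
def revStep : ℕ × ℕ → Option (ℕ × ℕ)
  | (n, k) => if 2 * k + 1 ≤ n then some (n - (2 * k + 1), k + 1) else none

/-- Iterate `revStep` a given number of times (failing if any step fails). -/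
def revIter : ℕ → ℕ × ℕ → Option (ℕ × ℕ)
  | 0, p => some p
  | n + 1, p => (revStep p).bind (revIter n)

/-- From `(m², 0)`, `m` reverse steps reach `(0, m)` (the square-root
computation succeeds); and if `n` is not a perfect square then iterating
from `(n, 0)` eventually reaches a stalled state `(s, k)` with
`0 < s < 2k + 1`. -/
theorem revSqrt_spec :
    (∀ m : ℕ, revIter m (m ^ 2, 0) = some (0, m)) ∧
    (∀ n : ℕ, (¬ ∃ m : ℕ, n = m ^ 2) →
      ∃ j s k : ℕ, revIter j (n, 0) = some (s, k) ∧ 0 < s ∧ s < 2 * k + 1) := by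
  have lemA : ∀ a k : ℕ, revIter a (2 * k * a + a ^ 2, k) = some (0, k + a) := by
    intro a
    induction a with
    | zero => intro k; simp [revIter]
    | succ a ih =>
      intro k
      have harith : 2 * k * (a + 1) + (a + 1) ^ 2
          = (2 * k + 1) + (2 * (k + 1) * a + a ^ 2) := by ring
      have hle : 2 * k + 1 ≤ 2 * k * (a + 1) + (a + 1) ^ 2 := by omega
      simp only [revIter, revStep, if_pos hle, Option.bind_some, Option.bind_some]
      have : 2 * k * (a + 1) + (a + 1) ^ 2 - (2 * k + 1) = 2 * (k + 1) * a + a ^ 2 := by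
        omega
      rw [this, ih (k + 1)]
      congr 2
      omega
  have lemB : ∀ n k : ℕ, (∀ a : ℕ, n ≠ 2 * k * a + a ^ 2) →
      ∃ j s k' : ℕ, revIter j (n, k) = some (s, k') ∧ 0 < s ∧ s < 2 * k' + 1 := by
    intro n
    induction n using Nat.strong_induction_on with
    | _ n ih =>
      intro k hn
      by_cases hle : 2 * k + 1 ≤ n
      · have hne : ∀ a : ℕ, n - (2 * k + 1) ≠ 2 * (k + 1) * a + a ^ 2 := by
          intro a h
          exact hn (a + 1) (by nlinarith [Nat.sub_add_cancel hle])
        obtain ⟨j, s, k', hiter, hs, hsk⟩ :=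
          ih (n - (2 * k + 1)) (by omega) (k + 1) hne
        exact ⟨j + 1, s, k', by
          simp only [revIter, revStep, if_pos hle, Option.bind_some]; exact hiter,
          hs, hsk⟩
      · have hpos : 0 < n := by
          rcases Nat.eq_zero_or_pos n with h | h
          · exact absurd (by simp [h]) (hn 0)
          · exact h
        exact ⟨0, n, k, rfl, hpos, by omega⟩
  constructor
  · intro m
    have := lemA m 0
    simpa using this
  · intro n hn
    apply lemB n 0
    intro a h
    exact hn ⟨a, by omega⟩
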